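/- Let H_0 be an r_0×n_0 binary matrix admitting a (4,1)-partition into p parts (every vector of F_2^{r_0}, including zero, is a sum of at least 1 and at most 4 columns of H_0 from distinct parts), let m be odd with 2^m − 1 ≥ p, and let H' be a 2m×n' binary matrix such that every vector of F_2^{2m} is a sum of at most 2 columns of H'. Then Construction QM_4^4 with D = D_5 and indicators in F_{2^m}^* produces an (r_0+4m)-row matrix with 2^m(n_0+1)+n'−1 columns such that every vector of F_2^{r_0+4m} is a sum of at most 4 of its columns. -/

import Mathlib

/-!
Write the target as `(s, a, b, c, d)`. The `(4,1)`-partition writes `s` as the sum of the `h_j`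
over a set `T` of `1 ≤ t ≤ 4` columns from distinct parts, so with pairwise distinct `β_j`.
Taking from each block `A(h_j, β_j)`, `j ∈ T`, the column indexed by a weight `ξ_j`, the
weights solve a Vandermonde system prescribing `t` of the four power sums `∑ β_j ^ k * ξ_j`:
the exponents `{0,1,2,3}`, `{0,1,2}`, `{0,3}`, `{0}` for `t = 4, 3, 2, 1`. The residual
`(0, 0, x, y, z)` is produced by `D_5` with at most two columns of `H'` for `(x, y)` and the
column `w = z`, and in each case the total is at most `4`. For `t = 2` the system is
Vandermonde in the `β_j ^ 3`; this is where `m` odd enters: `3 ∤ 2 ^ m - 1`, so cubing is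
injective on `F_{2^m}`.
-/

open Finset Function

def IsSumOfAtMost {ι M : Type*} [AddCommMonoid M] (f : ι → M) (k : ℕ) (u : M) : Prop :=
  ∃ T : Finset ι, T.card ≤ k ∧ u = ∑ i ∈ T, f i

namespace IsSumOfAtMost

variable {ι κ M : Type*} [AddCommMonoid M] {f : ι → M} {g : κ → M} {k l : ℕ} {u v : M}

theorem zero (f : ι → M) : IsSumOfAtMost f 0 0 := ⟨∅, le_rfl, by simp⟩

theorem mono (hu : IsSumOfAtMost f k u) (hkl : k ≤ l) : IsSumOfAtMost f l u :=
  let ⟨T, hT, hu⟩ := hu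
  ⟨T, hT.trans hkl, hu⟩

theorem sumElim_add (hu : IsSumOfAtMost f k u) (hv : IsSumOfAtMost g l v) :
    IsSumOfAtMost (Sum.elim f g) (k + l) (u + v) := by
  obtain ⟨S, hS, rfl⟩ := hu
  obtain ⟨T, hT, rfl⟩ := hv
  exact ⟨S.disjSum T, by rw [card_disjSum]; omega, by rw [sum_disjSum]; rfl⟩

end IsSumOfAtMost

theorem Matrix.exists_sum_vandermonde_mul_eq {K : Type*} [Field K] {n : ℕ} {γ : Fin n → K}
    (hγ : Injective γ) (v : Fin n → K) :
    ∃ ξ : Fin n → K, ∀ k : Fin n, ∑ j, γ j ^ (k : ℕ) * ξ j = v k := by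
  have hV : IsUnit (Matrix.vandermonde γ) := by
    rw [Matrix.isUnit_iff_isUnit_det, isUnit_iff_ne_zero]
    exact Matrix.det_vandermonde_ne_zero_iff.2 hγ
  obtain ⟨ξ, hξ⟩ := Matrix.vecMul_surjective_iff_isUnit.2 hV v
  exact ⟨ξ, fun k => by simp [← hξ, Matrix.vecMul, dotProduct, mul_comm]⟩

theorem Finset.exists_sum_pow_mul_eq {ι K : Type*} [Field K] {T : Finset ι} {n : ℕ}
    (hT : T.card = n) {γ : ι → K} (hγ : Set.InjOn γ T) (v : Fin n → K) :
    ∃ ξ : ι → K, ∀ k : Fin n, ∑ j ∈ T, γ j ^ (k : ℕ) * ξ j = v k := by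
  classical
  let e : T ≃ Fin n := T.equivFinOfCardEq hT
  obtain ⟨ξ, hξ⟩ := Matrix.exists_sum_vandermonde_mul_eq
    (γ := fun k => γ (e.symm k)) (hγ.injective.comp e.symm.injective) v
  refine ⟨fun j => if hj : j ∈ T then ξ (e ⟨j, hj⟩) else 0, fun k => ?_⟩
  rw [← hξ k, ← sum_coe_sort T, ← e.symm.sum_comp]
  simp

theorem pow_left_injective_of_coprime_card_sub_one {G₀ : Type*} [GroupWithZero G₀] {n : ℕ}
    (hn : n ≠ 0) (h : (Nat.card G₀ - 1).Coprime n) : Injective (· ^ n : G₀ → G₀) := by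
  intro x y hxy
  simp only at hxy
  rcases eq_or_ne x 0 with rfl | hx
  · exact ((pow_eq_zero_iff hn).1 (by rw [← hxy, zero_pow hn])).symm
  rcases eq_or_ne y 0 with rfl | hy
  · exact (pow_eq_zero_iff hn).1 (by rw [hxy, zero_pow hn])
  rw [← Nat.card_units] at h
  have := (Nat.Coprime.pow_left_bijective h).injective
    (a₁ := Units.mk0 x hx) (a₂ := Units.mk0 y hy) (Units.ext (by simpa using hxy))
  simpa using congrArg Units.val this

theorem Odd.coprime_two_pow_sub_one_three {m : ℕ} (hm : Odd m) : (2 ^ m - 1).Coprime 3 := by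
  obtain ⟨l, rfl⟩ := hm
  have : 2 ^ (2 * l + 1) % 3 = 2 := by
    rw [pow_succ, pow_mul, Nat.mul_mod, Nat.pow_mod]; norm_num
  rw [Nat.coprime_comm, Nat.Prime.coprime_iff_not_dvd Nat.prime_three]
  generalize 2 ^ (2 * l + 1) = N at this ⊢
  omega

section Columns

variable {ι κ V K : Type*} [AddCommMonoid V]

def qmColumnA [CommSemiring K] (h : ι → V) (β : ι → K) (jx : ι × K) :
    V × K × K × K × K :=
  (h jx.1, jx.2, β jx.1 * jx.2, β jx.1 ^ 2 * jx.2, β jx.1 ^ 3 * jx.2)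

def qmColumnD [AddCommMonoid K] (h' : κ → K × K) :
    κ ⊕ {w : K // w ≠ 0} → V × K × K × K × K :=
  Sum.elim (fun j => (0, 0, (h' j).1, (h' j).2, 0)) (fun w => (0, 0, 0, 0, w))

theorem isSumOfAtMost_qmColumnA [CommSemiring K] (h : ι → V) (β : ι → K) (T : Finset ι)
    (ξ : ι → K) :
    IsSumOfAtMost (qmColumnA h β) T.card
      (∑ j ∈ T, h j, ∑ j ∈ T, ξ j, ∑ j ∈ T, β j * ξ j, ∑ j ∈ T, β j ^ 2 * ξ j,
        ∑ j ∈ T, β j ^ 3 * ξ j) := by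
  classical
  refine ⟨T.image fun j => (j, ξ j), card_image_le, ?_⟩
  rw [sum_image fun i _ j _ hij => congrArg Prod.fst hij]
  simp [qmColumnA, prod_mk_sum]

def d5Cost [Zero K] [DecidableEq K] (x y z : K) : ℕ :=
  (if x = 0 ∧ y = 0 then 0 else 2) + (if z = 0 then 0 else 1)

theorem isSumOfAtMost_qmColumnD [AddCommMonoid K] [DecidableEq K] {h' : κ → K × K}
    (h'cov : ∀ u, IsSumOfAtMost h' 2 u) (x y z : K) :
    IsSumOfAtMost (qmColumnD (V := V) h') (d5Cost x y z) (0, 0, x, y, z) := by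
  have hxy : IsSumOfAtMost h' (if x = 0 ∧ y = 0 then 0 else 2) (x, y) := by
    split_ifs with h0
    · obtain ⟨rfl, rfl⟩ := h0
      exact .zero h'
    · exact h'cov _
  have hz : IsSumOfAtMost ((↑) : {w : K // w ≠ 0} → K) (if z = 0 then 0 else 1) z := by
    split_ifs with hz
    · subst hz
      exact .zero _
    · exact ⟨{⟨z, hz⟩}, le_rfl, by simp⟩
  obtain ⟨S, hS, hSxy⟩ := hxy
  obtain ⟨T, hT, rfl⟩ := hz
  refine ⟨S.disjSum T, by rw [card_disjSum]; exact add_le_add hS hT, ?_⟩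
  simpa [qmColumnD, sum_disjSum, ← prod_mk_sum, Prod.ext_iff, Prod.fst_sum, Prod.snd_sum]
    using hSxy

end Columns

theorem exists_weights_add_d5Cost_le_four {ι K : Type*} [Field K] [DecidableEq K]
    {T : Finset ι} {β : ι → K} (hβ : Set.InjOn β T) (hβ3 : Set.InjOn (fun j => β j ^ 3) T)
    (h1 : 1 ≤ T.card) (h4 : T.card ≤ 4) (a b c d : K) :
    ∃ ξ : ι → K, ∑ j ∈ T, ξ j = a ∧
      T.card + d5Cost (b - ∑ j ∈ T, β j * ξ j) (c - ∑ j ∈ T, β j ^ 2 * ξ j)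
        (d - ∑ j ∈ T, β j ^ 3 * ξ j) ≤ 4 := by
  obtain h | h | h | h : T.card = 1 ∨ T.card = 2 ∨ T.card = 3 ∨ T.card = 4 := by omega
  · obtain ⟨ξ, hξ⟩ := T.exists_sum_pow_mul_eq h hβ ![a]
    refine ⟨ξ, by simpa using hξ 0, ?_⟩
    rw [h, d5Cost]
    split_ifs <;> omega
  · obtain ⟨ξ, hξ⟩ := T.exists_sum_pow_mul_eq h hβ3 ![a, d]
    have hd : ∑ j ∈ T, β j ^ 3 * ξ j = d := by simpa using hξ 1
    refine ⟨ξ, by simpa using hξ 0, ?_⟩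
    simp only [h, d5Cost, hd, sub_self, if_pos]
    split_ifs <;> omega
  · obtain ⟨ξ, hξ⟩ := T.exists_sum_pow_mul_eq h hβ ![a, b, c]
    have hb : ∑ j ∈ T, β j * ξ j = b := by simpa using hξ 1
    have hc : ∑ j ∈ T, β j ^ 2 * ξ j = c := by simpa using hξ 2
    refine ⟨ξ, by simpa using hξ 0, ?_⟩
    simp only [h, d5Cost, hb, hc, sub_self, and_self, if_pos]
    split_ifs <;> omega
  · obtain ⟨ξ, hξ⟩ := T.exists_sum_pow_mul_eq h hβ ![a, b, c, d]
    have hb : ∑ j ∈ T, β j * ξ j = b := by simpa using hξ 1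
    have hc : ∑ j ∈ T, β j ^ 2 * ξ j = c := by simpa using hξ 2
    have hd : ∑ j ∈ T, β j ^ 3 * ξ j = d := by simpa using hξ 3
    refine ⟨ξ, by simpa using hξ 0, ?_⟩
    simp [h, d5Cost, hb, hc, hd]

theorem card_qmIndex {ι κ K : Type*} [Fintype ι] [Fintype κ] [GroupWithZero K] [Fintype K]
    [DecidableEq K] :
    Fintype.card ((ι × K) ⊕ (κ ⊕ {w : K // w ≠ 0}))
      = Fintype.card K * (Fintype.card ι + 1) + Fintype.card κ - 1 := by
  have hne : Fintype.card {w : K // w ≠ 0} = Fintype.card K - 1 := by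
    rw [← Fintype.card_congr unitsEquivNeZero, Fintype.card_units]
  have hpos := Fintype.card_pos (α := K)
  rw [Fintype.card_sum, Fintype.card_sum, Fintype.card_prod, hne, mul_add_one, mul_comm]
  omega

theorem QM4_4_construction_general
    (r0 n0 n' p m : ℕ) (hodd : Odd m)
    (K : Type) [Field K] [Fintype K] [DecidableEq K] (hK : Fintype.card K = 2 ^ m)
    (h : Fin n0 → (Fin r0 → ZMod 2)) (col : Fin n0 → Fin p)
    (hcov : ∀ s : Fin r0 → ZMod 2, ∃ T : Finset (Fin n0),
        1 ≤ T.card ∧ T.card ≤ 4 ∧ Set.InjOn col ↑T ∧ s = ∑ j ∈ T, h j)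
    (h' : Fin n' → K × K)
    (h'cov : ∀ u : K × K, ∃ T : Finset (Fin n'), T.card ≤ 2 ∧ u = ∑ j ∈ T, h' j)
    (β : Fin n0 → K)
    (hβ : ∀ i j, col i ≠ col j → β i ≠ β j) :
    Fintype.card ((Fin n0 × K) ⊕ (Fin n' ⊕ {w : K // w ≠ 0}))
        = 2 ^ m * (n0 + 1) + n' - 1 ∧
    ∀ u : (Fin r0 → ZMod 2) × K × K × K × K,
      ∃ T : Finset ((Fin n0 × K) ⊕ (Fin n' ⊕ {w : K // w ≠ 0})),
        T.card ≤ 4 ∧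
        u = ∑ i ∈ T, Sum.elim
              (fun jx : Fin n0 × K =>
                (h jx.1, jx.2, β jx.1 * jx.2, β jx.1 ^ 2 * jx.2, β jx.1 ^ 3 * jx.2))
              (Sum.elim
                (fun j : Fin n' =>
                  ((0 : Fin r0 → ZMod 2), (0 : K), (h' j).1, (h' j).2, (0 : K)))
                (fun w : {w : K // w ≠ 0} =>
                  ((0 : Fin r0 → ZMod 2), (0 : K), (0 : K), (0 : K), (w : K)))) i := by
  refine ⟨by rw [card_qmIndex, hK, Fintype.card_fin, Fintype.card_fin], ?_⟩
  rintro ⟨s, a, b, c, d⟩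
  show IsSumOfAtMost (Sum.elim (qmColumnA h β) (qmColumnD h')) 4 (s, a, b, c, d)
  obtain ⟨T, hT1, hT4, hcol, rfl⟩ := hcov s
  have hβT : Set.InjOn β T := fun i hi j hj hij =>
    by_contra fun hne => hβ i j (fun hc => hne (hcol hi hj hc)) hij
  have hcube : Injective (· ^ 3 : K → K) := pow_left_injective_of_coprime_card_sub_one
    three_ne_zero (by rw [Nat.card_eq_fintype_card, hK]; exact hodd.coprime_two_pow_sub_one_three)
  obtain ⟨ξ, ha, hcost⟩ :=
    exists_weights_add_d5Cost_le_four hβT (hcube.comp_injOn hβT) hT1 hT4 a b c d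
  convert ((isSumOfAtMost_qmColumnA h β T ξ).sumElim_add
    (isSumOfAtMost_qmColumnD h'cov _ _ _)).mono hcost using 1
  simp [ha]

/-- Construction QM_4^4. From H₀ (columns h) with a
(4,1)-partition into p parts, m odd with 2^m − 1 ≥ p, an auxiliary matrix H'
(columns h' in F_2^{2m} ≅ K × K) of covering radius 2, nonzero indicators β
distinct on distinct parts and D = D₅, one obtains an (r₀+4m)-row matrix with
2^m(n₀+1) + n' − 1 columns such that every vector of F_2^{r₀+4m} is a sum of
at most 4 of its columns. -/
theorem QM4_4_construction
    (r0 n0 n' p m : ℕ) (hodd : Odd m)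
    (K : Type) [Field K] [Fintype K] [DecidableEq K] (hK : Fintype.card K = 2 ^ m)
    (h : Fin n0 → (Fin r0 → ZMod 2)) (col : Fin n0 → Fin p)
    (hcov : ∀ s : Fin r0 → ZMod 2, ∃ T : Finset (Fin n0),
        1 ≤ T.card ∧ T.card ≤ 4 ∧ Set.InjOn col ↑T ∧ s = ∑ j ∈ T, h j)
    (h' : Fin n' → K × K)
    (h'cov : ∀ u : K × K, ∃ T : Finset (Fin n'), T.card ≤ 2 ∧ u = ∑ j ∈ T, h' j)
    (hp : p ≤ 2 ^ m - 1)
    (β : Fin n0 → K) (hβ0 : ∀ j, β j ≠ 0)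
    (hβ : ∀ i j, col i ≠ col j → β i ≠ β j) :
    Fintype.card ((Fin n0 × K) ⊕ (Fin n' ⊕ {w : K // w ≠ 0}))
        = 2 ^ m * (n0 + 1) + n' - 1 ∧
    ∀ u : (Fin r0 → ZMod 2) × K × K × K × K,
      ∃ T : Finset ((Fin n0 × K) ⊕ (Fin n' ⊕ {w : K // w ≠ 0})),
        T.card ≤ 4 ∧
        u = ∑ i ∈ T, Sum.elim
              (fun jx : Fin n0 × K =>
                (h jx.1, jx.2, β jx.1 * jx.2, β jx.1 ^ 2 * jx.2, β jx.1 ^ 3 * jx.2))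
              (Sum.elim
                (fun j : Fin n' =>
                  ((0 : Fin r0 → ZMod 2), (0 : K), (h' j).1, (h' j).2, (0 : K)))
                (fun w : {w : K // w ≠ 0} =>
                  ((0 : Fin r0 → ZMod 2), (0 : K), (0 : K), (0 : K), (w : K)))) i :=
  QM4_4_construction_general r0 n0 n' p m hodd K hK h col hcov h' h'cov β hβ
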